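/- arXiv:0710.5255 — 2 statements merged into one kernel-verified Lean document; each statement's English description precedes it below -/
import Mathlib

section
/- Let Γ act on a connected groupoid 𝒢 fixing the object b. Then the assignment x ↦ [Hom_𝒢(b, x)] defines a map from the Γ-fixed objects of 𝒢 to the nonabelian cohomology set H¹(Γ, Aut_𝒢(b)), sending b itself to the trivial class (abstract nonabelian Kummer map). -/
/-- Abstract nonabelian Kummer map.  Let `Γ` act (by functors fixing the
objects under consideration) on a connected groupoid with objects `X`, hom-sets
`Hom`, composition `comp`, identities `id_` and inverses `inv`.  For a fixed
object `x` and a chosen path `f₀ : Hom b x`, the function `c : Γ → Aut b`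
defined by `γ • f₀ = c γ ≫ f₀` is a 1-cocycle for the `Γ`-group
`Aut b = Hom b b` (with multiplication `u * v = comp v u` matching the right
torsor structure of `Hom b x`); its class in `H¹(Γ, Aut b)` is independent of
the choice of `f₀`, so `x ↦ [Hom(b,x)]` is a well-defined map from the
`Γ`-fixed objects to `H¹(Γ, Aut b)`; and the object `b` itself (via
`f₀ = id_ b`) is sent to the trivial class. -/
theorem abstract_nonabelian_kummer_map
    (Γ : Type*) [Group Γ] (X : Type*) (Hom : X → X → Type*)
    (comp : ∀ {x y z : X}, Hom x y → Hom y z → Hom x z)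
    (id_ : ∀ x : X, Hom x x)
    (inv : ∀ {x y : X}, Hom x y → Hom y x)
    (assoc : ∀ {w x y z : X} (f : Hom w x) (g : Hom x y) (h : Hom y z),
      comp (comp f g) h = comp f (comp g h))
    (id_comp : ∀ {x y : X} (f : Hom x y), comp (id_ x) f = f)
    (comp_id : ∀ {x y : X} (f : Hom x y), comp f (id_ y) = f)
    (inv_comp : ∀ {x y : X} (f : Hom x y), comp (inv f) f = id_ y)
    (comp_inv : ∀ {x y : X} (f : Hom x y), comp f (inv f) = id_ x)
    (hconn : ∀ x y : X, Nonempty (Hom x y))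
    -- the action of `Γ` on the (Γ-fixed part of the) groupoid:
    (act : Γ → ∀ {x y : X}, Hom x y → Hom x y)
    (act_one : ∀ {x y : X} (f : Hom x y), act 1 f = f)
    (act_mul : ∀ (γ δ : Γ) {x y : X} (f : Hom x y), act (γ * δ) f = act γ (act δ f))
    (act_comp : ∀ (γ : Γ) {x y z : X} (f : Hom x y) (g : Hom y z),
      act γ (comp f g) = comp (act γ f) (act γ g))
    (act_id : ∀ (γ : Γ) (x : X), act γ (id_ x) = id_ x)
    (b x : X) :
    -- `Hom b x` is a torsor under the vertex group `Hom b b`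
    (∀ f f' : Hom b x, ∃! u : Hom b b, comp u f = f') ∧
    -- the Kummer cocycle: `c (γδ) = c γ * (γ • c δ)` in `Aut b`
    (∀ (f₀ : Hom b x) (c : Γ → Hom b b),
      (∀ γ : Γ, act γ f₀ = comp (c γ) f₀) →
      ∀ γ δ : Γ, c (γ * δ) = comp (act γ (c δ)) (c γ)) ∧
    -- independence of the basepoint path: the class in `H¹(Γ, Aut b)` is
    -- well defined (the two cocycles are cohomologous)
    (∀ (f₀ f₁ : Hom b x) (c c' : Γ → Hom b b),
      (∀ γ : Γ, act γ f₀ = comp (c γ) f₀) →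
      (∀ γ : Γ, act γ f₁ = comp (c' γ) f₁) →
      ∃ u : Hom b b, ∀ γ : Γ, c' γ = comp (act γ u) (comp (c γ) (inv u))) ∧
    -- the basepoint `b` itself is sent to the trivial class
    (∀ c : Γ → Hom b b, (∀ γ : Γ, act γ (id_ b) = comp (c γ) (id_ b)) →
      ∀ γ : Γ, c γ = id_ b) := by
  have cancel : ∀ {y : X} (f : Hom b y) {u v : Hom b b},
      comp u f = comp v f → u = v := by
    intro y f u v h
    have : comp (comp u f) (inv f) = comp (comp v f) (inv f) := by rw [h]
    rwa [assoc, assoc, comp_inv, comp_id, comp_id] at this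
  refine ⟨?_, ?_, ?_, ?_⟩
  · intro f f'
    refine ⟨comp f' (inv f), show comp (comp f' (inv f)) f = f' by
      rw [assoc, inv_comp, comp_id], ?_⟩
    intro u hu
    rw [← hu, assoc, comp_inv, comp_id]
  · intro f₀ c hc γ δ
    apply cancel f₀
    rw [← hc, act_mul, hc δ, act_comp, hc γ, ← assoc]
  · intro f₀ f₁ c c' hc hc'
    set u := comp f₁ (inv f₀) with hu
    have hf1 : comp u f₀ = f₁ := by rw [hu, assoc, inv_comp, comp_id]
    have hinv : comp (inv u) f₁ = f₀ := by rw [← hf1, ← assoc, inv_comp, id_comp]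
    refine ⟨u, fun γ => ?_⟩
    apply cancel f₁
    calc comp (c' γ) f₁
        = act γ f₁ := (hc' γ).symm
      _ = act γ (comp u f₀) := by rw [hf1]
      _ = comp (act γ u) (act γ f₀) := by rw [act_comp]
      _ = comp (act γ u) (comp (c γ) f₀) := by rw [hc]
      _ = comp (act γ u) (comp (c γ) (comp (inv u) f₁)) := by rw [hinv]
      _ = comp (comp (act γ u) (comp (c γ) (inv u))) f₁ := by rw [assoc, assoc]
  · intro c hc γ
    have := hc γ
    rw [act_id, comp_id] at this
    exact this.symm
end

section
/- If A is an abelian group such that A/mA is finite for some m ≥ 2, and h : A → ℝ is a function satisfying h(ma) = m²·h(a) (quadratic height scaling), h(a+b) ≤ 2h(a) + 2h(b) + C for a constant C, and {a ∈ A : h(a) ≤ B} is finite for every B, then A is finitely generated (formal descent argument of Mordell–Weil). -/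
/-- Formal descent argument of Mordell–Weil: if `A` is an abelian group with
`A/mA` finite for some `m ≥ 2`, and `h : A → ℝ` is a height function with
quadratic scaling `h(ma) = m² h(a)`, quasi-parallelogram bound
`h(a+b) ≤ 2h(a) + 2h(b) + C`, and finite bounded-height sets, then `A` is
finitely generated. -/
theorem mordell_weil_descent
    (A : Type*) [AddCommGroup A] (m : ℕ) (hm : 2 ≤ m)
    (hfinquot : Finite (A ⧸ (m • (AddMonoidHom.id A)).range))
    (h : A → ℝ) (C : ℝ)
    (hscale : ∀ a : A, h (m • a) = (m : ℝ) ^ 2 * h a)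
    (hquad : ∀ a b : A, h (a + b) ≤ 2 * h a + 2 * h b + C)
    (hbdd : ∀ B : ℝ, {a : A | h a ≤ B}.Finite) :
    AddGroup.FG A := by
  classical
  set Q := (m • (AddMonoidHom.id A)).range with hQdef
  haveI : Fintype (A ⧸ Q) := Fintype.ofFinite _
  let r : A ⧸ Q → A := Quotient.out
  have hr : ∀ q : A ⧸ Q, QuotientAddGroup.mk (r q) = q := fun q => Quotient.out_eq q
  obtain ⟨D, hD⟩ : ∃ D, ∀ q : A ⧸ Q, h (-(r q)) ≤ D :=
    ⟨Finset.univ.sup' Finset.univ_nonempty (fun q => h (-(r q))),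
      fun q => Finset.le_sup' (fun q => h (-(r q))) (Finset.mem_univ q)⟩
  set K := 2 * D + C with hK
  have hm2 : (0:ℝ) < (m:ℝ)^2 - 2 := by
    have : (2:ℝ) ≤ (m:ℝ) := by exact_mod_cast hm
    nlinarith
  set B := K / ((m:ℝ)^2 - 2) with hB
  set S : Set A := {a | h a ≤ B} ∪ Set.range r with hS
  have hSfin : S.Finite := (hbdd B).union (Set.finite_range r)
  rw [AddGroup.fg_iff]
  refine ⟨S, ?_, hSfin⟩
  rw [eq_top_iff]
  intro a₀ _
  by_contra ha₀
  -- minimal-height counterexample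
  set T : Set A := {a | a ∉ AddSubgroup.closure S ∧ h a ≤ h a₀} with hT
  have hTfin : T.Finite := (hbdd (h a₀)).subset (fun a ha => ha.2)
  have hTne : T.Nonempty := ⟨a₀, ha₀, le_refl _⟩
  obtain ⟨a, haT, hmin⟩ := Set.exists_min_image T h hTfin hTne
  have hacl : a ∉ AddSubgroup.closure S := haT.1
  -- descent step
  set s := r (QuotientAddGroup.mk a) with hs
  have hmk : (QuotientAddGroup.mk s : A ⧸ Q) = QuotientAddGroup.mk a := hr _
  have hdiff : -s + a ∈ Q := (QuotientAddGroup.eq).mp hmk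
  obtain ⟨b, hb⟩ := hdiff
  have hb' : m • b = a - s := by
    simpa [sub_eq_neg_add] using hb
  have hsS : s ∈ S := Or.inr ⟨_, rfl⟩
  have hscl : s ∈ AddSubgroup.closure S := AddSubgroup.subset_closure hsS
  have hbcl : b ∉ AddSubgroup.closure S := by
    intro hbc
    apply hacl
    have : a = m • b + s := by rw [hb']; abel
    rw [this]
    exact add_mem (AddSubgroup.nsmul_mem _ hbc m) hscl
  -- height bound on b
  have hhb : (m:ℝ)^2 * h b ≤ 2 * h a + K := by
    have h1 : h (m • b) = h (a + (-s)) := by rw [hb', sub_eq_add_neg]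
    have h2 : h (a + (-s)) ≤ 2 * h a + 2 * h (-s) + C := hquad a (-s)
    have h3 : h (-s) ≤ D := hD _
    rw [← hscale b, h1]
    have := h2
    linarith
  -- a not in S, so h a > B
  have haB : B < h a := by
    by_contra hle
    push_neg at hle
    exact hacl (AddSubgroup.subset_closure (Or.inl hle))
  have hKlt : K < ((m:ℝ)^2 - 2) * h a := by
    have := (div_lt_iff₀ hm2).mp haB
    linarith
  have hblt : h b < h a := by
    have hm2' : (0:ℝ) < (m:ℝ)^2 := by nlinarith
    have : (m:ℝ)^2 * h b < (m:ℝ)^2 * h a := by nlinarith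
    exact lt_of_mul_lt_mul_left this (le_of_lt hm2')
  have hbT : b ∈ T := ⟨hbcl, le_trans hblt.le haT.2⟩
  exact absurd (hmin b hbT) (not_le.mpr hblt)
end
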